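/- Let A_γ be the single-qubit amplitude-damping channel with Kraus operators K₀ = diag(1, √(1−γ)) and K₁ = ( (0, √γ), (0, 0) ), applied independently to both qubits of the Bell state |Φ⟩ = (|00⟩+|11⟩)/√2. When both qubits of (A_γ ⊗ A_γ)(|Φ⟩⟨Φ|) are measured in the σ_x eigenbasis {|+⟩, |−⟩}: (i) the mutual information of the outcome distribution equals ((2−γ)/2)·log₂(2−γ) + (γ/2)·log₂γ; and (ii) assigning values ±1 to the outcomes, the covariance of the two outcomes equals 1−γ (indeed tr((σ_x⊗σ_x)·(A_γ⊗A_γ)(|Φ⟩⟨Φ|)) = 1−γ and both single-qubit means vanish). -/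

import Mathlib

open scoped Kronecker Matrix Classical

noncomputable section

/-- Base-2 Shannon entropy of a finitely supported distribution. -/
def shannon {α : Type*} [Fintype α] (p : α → ℝ) : ℝ :=
  -∑ x, p x * Real.logb 2 (p x)

/-- Base-2 von Neumann entropy of a matrix (junk value `0` if not Hermitian),
computed from the eigenvalues. -/
def vnEntropy {d : Type*} [Fintype d] [DecidableEq d] (ρ : Matrix d d ℂ) : ℝ :=
  if h : ρ.IsHermitian then -∑ k, h.eigenvalues k * Real.logb 2 (h.eigenvalues k) else 0

/-- Amplitudes of the two-qubit Bell state `|Φ⟩ = (|00⟩ + |11⟩)/√2`. -/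
def bellVec : Fin 2 × Fin 2 → ℂ :=
  fun x => if x.1 = x.2 then ((Real.sqrt 2 : ℝ) : ℂ)⁻¹ else 0

/-- The two-qubit Bell state `|Φ⟩⟨Φ|`. -/
def bellState : Matrix (Fin 2 × Fin 2) (Fin 2 × Fin 2) ℂ :=
  Matrix.of fun x y => bellVec x * star (bellVec y)

/-- The two-qubit shared random bit `σ₂ = (|00⟩⟨00| + |11⟩⟨11|)/2`. -/
def sigma2 : Matrix (Fin 2 × Fin 2) (Fin 2 × Fin 2) ℂ :=
  Matrix.of fun x y => if x = y ∧ x.1 = x.2 then (1 : ℂ)/2 else 0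

/-- The two-qubit depolarizing channel `E_γ(ρ) = (1-γ)ρ + (γ/4)I₄`. -/
def depol2 (γ : ℝ) (ρ : Matrix (Fin 2 × Fin 2) (Fin 2 × Fin 2) ℂ) :
    Matrix (Fin 2 × Fin 2) (Fin 2 × Fin 2) ℂ :=
  (1 - (γ : ℂ)) • ρ + ((γ : ℂ)/4) • (1 : Matrix (Fin 2 × Fin 2) (Fin 2 × Fin 2) ℂ)

/-- Pauli X. -/
def pauliX : Matrix (Fin 2) (Fin 2) ℂ := !![0, 1; 1, 0]
/-- Pauli Y. -/
def pauliY : Matrix (Fin 2) (Fin 2) ℂ := !![0, -Complex.I; Complex.I, 0]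
/-- Pauli Z. -/
def pauliZ : Matrix (Fin 2) (Fin 2) ℂ := !![1, 0; 0, -1]

/-- The values `±1` assigned to the two outcomes of a qubit measurement. -/
def pmVal : Fin 2 → ℝ := ![1, -1]

/-- Kraus operators of the single-qubit amplitude-damping channel `A_γ`. -/
def ampKraus (γ : ℝ) : Fin 2 → Matrix (Fin 2) (Fin 2) ℂ :=
  ![!![1, 0; 0, ((Real.sqrt (1 - γ) : ℝ) : ℂ)],
    !![0, ((Real.sqrt γ : ℝ) : ℂ); 0, 0]]

/-- `(A_γ ⊗ A_γ)(ρ)`: the single-qubit amplitude-damping channel applied independently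
to both qubits. -/
def ampBoth (γ : ℝ) (ρ : Matrix (Fin 2 × Fin 2) (Fin 2 × Fin 2) ℂ) :
    Matrix (Fin 2 × Fin 2) (Fin 2 × Fin 2) ℂ :=
  ∑ i : Fin 2, ∑ j : Fin 2,
    (ampKraus γ i ⊗ₖ ampKraus γ j) * ρ * (ampKraus γ i ⊗ₖ ampKraus γ j)ᴴ

/-- Projectors onto the `σ_x` eigenbasis `{|+⟩, |−⟩}` (`0 ↦ +`, `1 ↦ −`). -/
def xProj : Fin 2 → Matrix (Fin 2) (Fin 2) ℂ :=
  ![!![1/2, 1/2; 1/2, 1/2], !![1/2, -(1/2); -(1/2), 1/2]]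

/-- Outcome distribution of the `σ_x`-basis measurement of both qubits of the
amplitude-damped Bell state. -/
def ampXProb (γ : ℝ) : Fin 2 × Fin 2 → ℝ :=
  fun st => (((xProj st.1 ⊗ₖ xProj st.2) * ampBoth γ bellState).trace).re

/-!
Writing the σ_x projectors as `(1 ± σ_x)/2`, the outcome probabilities depend only on `tr ρ' = 1`
and the Pauli expectations `⟨σ_x ⊗ 1⟩ = ⟨1 ⊗ σ_x⟩ = 0`, `⟨σ_x ⊗ σ_x⟩ = 1 - γ` of the damped
state `ρ'`, which is computed explicitly. Hence the outcomes are two uniform `±1` bits with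
correlation `c = 1 - γ`, distributed as `(1 + a b c)/4`: their covariance is `c`, and since the
marginals are uniform the mutual information is `2 - H = ((1+c)/2) log₂(1+c) + ((1-c)/2) log₂(1-c)`.
-/

lemma mul_logb_div (b x : ℝ) {y : ℝ} (hy : y ≠ 0) :
    x * Real.logb b (x / y) = x * Real.logb b x - x * Real.logb b y := by
  rcases eq_or_ne x 0 with rfl | hx
  · simp
  · rw [Real.logb_div hx hy, mul_sub]

def mutualInfo {α β : Type*} [Fintype α] [Fintype β] (P : α × β → ℝ) : ℝ :=
  shannon (fun a => ∑ b, P (a, b)) + shannon (fun b => ∑ a, P (a, b)) - shannon P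

lemma shannon_uniform_fin_two : shannon (fun _ : Fin 2 => (1 / 2 : ℝ)) = 1 := by
  simp [shannon, Real.logb_self_eq_one]

@[simp] lemma pmVal_zero : pmVal 0 = 1 := rfl

@[simp] lemma pmVal_one : pmVal 1 = -1 := rfl

def correlatedBits (c : ℝ) : Fin 2 × Fin 2 → ℝ :=
  fun x => (1 + pmVal x.1 * pmVal x.2 * c) / 4

section correlatedBits

variable (c : ℝ)

lemma correlatedBits_apply (a b : Fin 2) :
    correlatedBits c (a, b) = if a = b then (1 + c) / 4 else (1 - c) / 4 := by
  fin_cases a <;> fin_cases b <;> simp [correlatedBits] <;> ring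

lemma sum_correlatedBits_fst (a : Fin 2) : ∑ b, correlatedBits c (a, b) = 1 / 2 := by
  fin_cases a <;> simp [correlatedBits_apply, Fin.sum_univ_two] <;> ring

lemma sum_correlatedBits_snd (b : Fin 2) : ∑ a, correlatedBits c (a, b) = 1 / 2 := by
  fin_cases b <;> simp [correlatedBits_apply, Fin.sum_univ_two] <;> ring

lemma shannon_correlatedBits :
    shannon (correlatedBits c) =
      2 - (1 + c) / 2 * Real.logb 2 (1 + c) - (1 - c) / 2 * Real.logb 2 (1 - c) := by
  have hlog4 : Real.logb 2 4 = 2 := by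
    rw [show (4 : ℝ) = 2 ^ (2 : ℝ) by norm_num, Real.logb_rpow two_pos (by norm_num)]
  have hplus := mul_logb_div 2 (1 + c) (y := 4) (by norm_num)
  have hminus := mul_logb_div 2 (1 - c) (y := 4) (by norm_num)
  simp only [shannon, Fintype.sum_prod_type, Fin.sum_univ_two, correlatedBits_apply, Fin.isValue,
    ↓reduceIte, Fin.reduceEq]
  linear_combination (-1 / 2) * hplus + (-1 / 2) * hminus + hlog4

lemma mutualInfo_correlatedBits :
    mutualInfo (correlatedBits c) =
      (1 + c) / 2 * Real.logb 2 (1 + c) + (1 - c) / 2 * Real.logb 2 (1 - c) := by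
  simp only [mutualInfo, sum_correlatedBits_fst, sum_correlatedBits_snd, shannon_uniform_fin_two,
    shannon_correlatedBits]
  ring

lemma covariance_correlatedBits :
    (∑ x, pmVal x.1 * pmVal x.2 * correlatedBits c x)
        - (∑ x, pmVal x.1 * correlatedBits c x) * (∑ x, pmVal x.2 * correlatedBits c x) = c := by
  simp only [correlatedBits, Fintype.sum_prod_type, Fin.sum_univ_two, pmVal_zero, pmVal_one]
  ring

end correlatedBits

lemma xProj_eq (a : Fin 2) : xProj a = (1 / 2 : ℂ) • (1 + (pmVal a : ℂ) • pauliX) := by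
  fin_cases a <;> ext i j <;> fin_cases i <;> fin_cases j <;> simp [xProj, pauliX]

lemma trace_xProj_kronecker_mul (a b : Fin 2) (ρ : Matrix (Fin 2 × Fin 2) (Fin 2 × Fin 2) ℂ) :
    ((xProj a ⊗ₖ xProj b) * ρ).trace =
      (ρ.trace + pmVal a * ((pauliX ⊗ₖ 1) * ρ).trace + pmVal b * ((1 ⊗ₖ pauliX) * ρ).trace
        + pmVal a * pmVal b * ((pauliX ⊗ₖ pauliX) * ρ).trace) / 4 := by
  simp only [xProj_eq, Matrix.smul_kronecker, Matrix.kronecker_smul, Matrix.add_kronecker,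
    Matrix.kronecker_add, Matrix.one_kronecker_one, Matrix.add_mul, Matrix.smul_mul,
    Matrix.one_mul, Matrix.trace_add, Matrix.trace_smul, smul_eq_mul]
  ring

open Matrix in
def dampedBell (γ : ℝ) : Matrix (Fin 2 × Fin 2) (Fin 2 × Fin 2) ℂ :=
  single (0, 0) (0, 0) ((1 + (γ : ℂ) ^ 2) / 2)
    + single (0, 0) (1, 1) ((1 - (γ : ℂ)) / 2) + single (1, 1) (0, 0) ((1 - (γ : ℂ)) / 2)
    + single (0, 1) (0, 1) ((γ : ℂ) * (1 - γ) / 2) + single (1, 0) (1, 0) ((γ : ℂ) * (1 - γ) / 2)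
    + single (1, 1) (1, 1) ((1 - (γ : ℂ)) ^ 2 / 2)

lemma ampBoth_bellState {γ : ℝ} (h0 : 0 ≤ γ) (h1 : γ ≤ 1) :
    ampBoth γ bellState = dampedBell γ := by
  have hs : (Real.sqrt γ : ℂ) ^ 2 = γ := by norm_cast; exact Real.sq_sqrt h0
  have ht : (Real.sqrt (1 - γ) : ℂ) ^ 2 = 1 - γ := by
    norm_cast; exact Real.sq_sqrt (by linarith)
  have hr : ((Real.sqrt 2 : ℂ))⁻¹ ^ 2 = 1 / 2 := by
    rw [inv_pow]; norm_cast; rw [Real.sq_sqrt zero_le_two]; norm_num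
  have hs4 : (Real.sqrt γ : ℂ) ^ 4 = γ ^ 2 := by rw [← hs]; ring
  have ht4 : (Real.sqrt (1 - γ) : ℂ) ^ 4 = (1 - γ) ^ 2 := by rw [← ht]; ring
  -- every entry is a polynomial in the three square roots with only even exponents
  ext ⟨i, j⟩ ⟨k, l⟩
  fin_cases i <;> fin_cases j <;> fin_cases k <;> fin_cases l <;>
    simp [ampBoth, bellState, bellVec, ampKraus, dampedBell, Matrix.mul_apply,
      Fin.sum_univ_two, Fintype.sum_prod_type] <;>
    ring_nf <;> simp [hs, ht, hr, hs4, ht4] <;> ring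

lemma trace_dampedBell (γ : ℝ) : (dampedBell γ).trace = 1 := by
  simp only [dampedBell, Matrix.trace_add, Matrix.trace_single_eq_same, ne_eq, Prod.mk.injEq,
    zero_ne_one, one_ne_zero, and_self, not_false_eq_true,
    Matrix.trace_single_eq_of_ne, add_zero]
  ring

lemma trace_pauliX_kronecker_pauliX_mul_dampedBell (γ : ℝ) :
    ((pauliX ⊗ₖ pauliX) * dampedBell γ).trace = 1 - γ := by
  simp [dampedBell, Matrix.mul_add, Matrix.trace_mul_single, pauliX]
  ring

lemma trace_pauliX_kronecker_one_mul_dampedBell (γ : ℝ) :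
    ((pauliX ⊗ₖ 1) * dampedBell γ).trace = 0 := by
  simp [dampedBell, Matrix.mul_add, Matrix.trace_mul_single, pauliX]

lemma trace_one_kronecker_pauliX_mul_dampedBell (γ : ℝ) :
    ((1 ⊗ₖ pauliX) * dampedBell γ).trace = 0 := by
  simp [dampedBell, Matrix.mul_add, Matrix.trace_mul_single, pauliX]

lemma ampXProb_eq_correlatedBits {γ : ℝ} (h0 : 0 ≤ γ) (h1 : γ ≤ 1) :
    ampXProb γ = correlatedBits (1 - γ) := by
  funext x
  simp only [ampXProb, correlatedBits, trace_xProj_kronecker_mul, ampBoth_bellState h0 h1,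
    trace_dampedBell, trace_pauliX_kronecker_pauliX_mul_dampedBell,
    trace_pauliX_kronecker_one_mul_dampedBell, trace_one_kronecker_pauliX_mul_dampedBell,
    mul_zero, add_zero]
  norm_cast

/-- measuring both qubits of the amplitude-damped Bell state in the
`σ_x` eigenbasis: (i) the mutual information of the outcome distribution equals
`((2−γ)/2)·log₂(2−γ) + (γ/2)·log₂ γ`; (ii) the covariance of the `±1`-valued outcomes
equals `1−γ`, indeed `tr((σ_x⊗σ_x)ρ') = 1−γ` and both single-qubit means vanish. -/
theorem amplitude_damped_bell_statistics (γ : ℝ) (hγ : γ ∈ Set.Icc (0 : ℝ) 1) :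
    (shannon (fun a : Fin 2 => ∑ b : Fin 2, ampXProb γ (a, b))
        + shannon (fun b : Fin 2 => ∑ a : Fin 2, ampXProb γ (a, b))
        - shannon (ampXProb γ)
      = ((2 - γ) / 2) * Real.logb 2 (2 - γ) + (γ / 2) * Real.logb 2 γ) ∧
    ((pauliX ⊗ₖ pauliX) * ampBoth γ bellState).trace = ((1 - γ : ℝ) : ℂ) ∧
    ((pauliX ⊗ₖ (1 : Matrix (Fin 2) (Fin 2) ℂ)) * ampBoth γ bellState).trace = 0 ∧
    (((1 : Matrix (Fin 2) (Fin 2) ℂ) ⊗ₖ pauliX) * ampBoth γ bellState).trace = 0 ∧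
    (∑ x : Fin 2 × Fin 2, pmVal x.1 * pmVal x.2 * ampXProb γ x)
        - (∑ x : Fin 2 × Fin 2, pmVal x.1 * ampXProb γ x)
          * (∑ x : Fin 2 × Fin 2, pmVal x.2 * ampXProb γ x)
      = 1 - γ := by
  obtain ⟨h0, h1⟩ := hγ
  have hρ := ampBoth_bellState h0 h1
  have hP := ampXProb_eq_correlatedBits h0 h1
  refine ⟨?_, ?_, ?_, ?_, ?_⟩
  · have hI := mutualInfo_correlatedBits (1 - γ)
    rw [show 1 + (1 - γ) = 2 - γ by ring, sub_sub_cancel, ← hP] at hI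
    exact hI
  · rw [hρ, trace_pauliX_kronecker_pauliX_mul_dampedBell, Complex.ofReal_sub, Complex.ofReal_one]
  · rw [hρ, trace_pauliX_kronecker_one_mul_dampedBell]
  · rw [hρ, trace_one_kronecker_pauliX_mul_dampedBell]
  · rw [hP]
    exact covariance_correlatedBits (1 - γ)

end
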